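/- arXiv:2404.14431 — 2 statements merged into one kernel-verified Lean document; each statement's English description precedes it below -/
import Mathlib

section
/- Let s ≥ 1, let M = H^s, and let φ ∈ M with φ ∉ πM; set β := h(φ,φ) ∈ O_{F₀}. Then there exists a standard normal basis σ₁,τ₁,…,σ_s,τ_s of M such that φ = σ₁ − (πβ/2)τ₁ and such that σ₁ + (πβ/2)τ₁, σ₂, τ₂, …, σ_s, τ_s is an O_F-basis of M(φ). Consequently, if β ≠ 0, then the O_F-length of M/(M(φ) ⊞ O_F·φ) equals 1 + val_π(β), where val_π is the valuation with val_π(π) = 1, and (M(φ) ⊗_{O_F} F) ⊞ F·φ = M ⊗_{O_F} F. -/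
noncomputable section

/-- Gram matrix of `H^s` w.r.t. a standard normal basis (indexed by `Fin s × Fin 2`). -/
def hypGram {F : Type*} [Field F] (πF : F) (s : ℕ) :
    Fin s × Fin 2 → Fin s × Fin 2 → F := fun x y =>
  if x.1 = y.1 then
    if x.2 = 0 ∧ y.2 = 1 then πF⁻¹
    else if x.2 = 1 ∧ y.2 = 0 then -πF⁻¹
    else 0
  else 0

/-- The orthogonal complement `M(φ) = {x ∈ M | h(x,φ) = 0}` as a submodule. -/
def orthoSubmodule {F O M : Type*} [Field F] [CommRing O] [Algebra O F]
    [AddCommGroup M] [Module O M] (h : M → M → F)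
    (haddl : ∀ x y z : M, h (x + y) z = h x z + h y z)
    (hsmull : ∀ (a : O) (x y : M), h (a • x) y = algebraMap O F a * h x y)
    (φ : M) : Submodule O M where
  carrier := {x | h x φ = 0}
  add_mem' := by
    intro a b ha hb
    simp only [Set.mem_setOf_eq] at *
    rw [haddl, ha, hb, add_zero]
  zero_mem' := by
    have h0 : h ((0 : O) • (0 : M)) φ = algebraMap O F 0 * h 0 φ := hsmull 0 0 φ
    simpa using h0
  smul_mem' := by
    intro a x hx
    simp only [Set.mem_setOf_eq] at *
    rw [hsmull, hx, mul_zero]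

/-- `Q` has length `n` as an `O`-module (via composition series). -/
def moduleLengthEq (O Q : Type*) [Ring O] [AddCommGroup Q] [Module O Q] (n : ℕ) : Prop :=
  ∃ s : CompositionSeries (Submodule O Q), s.head = ⊥ ∧ s.last = ⊤ ∧ s.length = n

/-!
Since `φ ∉ πM`, some coordinate of `φ` in a standard normal basis is a unit; permuting the
hyperbolic planes and rotating `(e, f) ↦ (f, -e)` makes it the coefficient of `e₁`. A unit
multiple `τ` of `f₁` is then isotropic, orthogonal to every basis vector except `e₁`, and has
`h(τ, φ) = -π⁻¹`. Hence `φ + (πβ/2) τ`, `τ` and the vectors `b_k + d_k τ` (with `d_k` chosen to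
make them orthogonal to `φ`) form a new standard normal basis in which `φ = σ₁ - (πβ/2) τ₁`.

In that basis `x ⊥ φ` exactly when the `τ₁`-coordinate of `x` is `πβ/2` times its
`σ₁`-coordinate, so `M(φ)` is the kernel of the `τ₁`-coordinate `ℓ` of the basis obtained by the
transvection `σ₁ ↦ σ₁ + (πβ/2) τ₁`. As `ℓ φ = -πβ`, `M(φ) + O φ = ℓ⁻¹(πβ O)`, and
`M / (M(φ) + O φ) ≅ O / (πβ)` has length `1 + val_π(β)`.
-/

open Module

section Hermitian

variable {F : Type*} (O : Type*) {M : Type*} [Field F] [CommRing O] [Algebra O F]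
  [AddCommGroup M] [Module O M]

structure IsHermitianForm (σ : F ≃+* F) (h : M → M → F) : Prop where
  add_left : ∀ x y z : M, h (x + y) z = h x z + h y z
  smul_left : ∀ (a : O) (x y : M), h (a • x) y = algebraMap O F a * h x y
  conj : ∀ x y : M, h y x = σ (h x y)

namespace IsHermitianForm

variable {O} {σ : F ≃+* F} {h : M → M → F}

theorem neg_left (hh : IsHermitianForm O σ h) (x y : M) : h (-x) y = -h x y := by
  simpa using hh.smul_left (-1) x y

theorem sum_left (hh : IsHermitianForm O σ h) {ι : Type*} (t : Finset ι) (f : ι → M) (y : M) :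
    h (∑ i ∈ t, f i) y = ∑ i ∈ t, h (f i) y :=
  map_sum (AddMonoidHom.mk' (h · y) (hh.add_left · · y)) f t

theorem add_right (hh : IsHermitianForm O σ h) (x y z : M) : h x (y + z) = h x y + h x z := by
  rw [hh.conj, hh.add_left, map_add, ← hh.conj, ← hh.conj]

theorem smul_right (hh : IsHermitianForm O σ h) (a : O) (x y : M) :
    h x (a • y) = σ (algebraMap O F a) * h x y := by
  rw [hh.conj, hh.smul_left, map_mul, ← hh.conj]

theorem neg_right (hh : IsHermitianForm O σ h) (x y : M) : h x (-y) = -h x y := by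
  rw [hh.conj, hh.neg_left, map_neg, ← hh.conj]

theorem sub_right (hh : IsHermitianForm O σ h) (x y z : M) : h x (y - z) = h x y - h x z := by
  rw [sub_eq_add_neg, hh.add_right, hh.neg_right, sub_eq_add_neg]

theorem add_smul_left (hh : IsHermitianForm O σ h) (x y z : M) (a : O) :
    h (x + a • y) z = h x z + algebraMap O F a * h y z := by
  rw [hh.add_left, hh.smul_left]

theorem add_smul_right (hh : IsHermitianForm O σ h) (x y z : M) (a : O) :
    h x (y + a • z) = h x y + σ (algebraMap O F a) * h x z := by
  rw [hh.add_right, hh.smul_right]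

theorem map_eq_neg_of_two_mul (hh : IsHermitianForm O σ h) (h2 : (2 : F) ≠ 0) {πF : F}
    (hσπ : σ πF = -πF) {a : F} {φ : M} (ha : 2 * a = πF * h φ φ) : σ a = -a := by
  have hσa := congrArg σ ha
  rw [map_mul, map_ofNat, map_mul, hσπ, ← hh.conj] at hσa
  exact mul_left_cancel₀ h2 (by linear_combination hσa + ha)

end IsHermitianForm

end Hermitian

section HypGram

variable {F : Type*} [Field F] {s : ℕ}

@[simp]
theorem hypGram_zero_one (πF : F) (i : Fin s) : hypGram πF s (i, 0) (i, 1) = πF⁻¹ := by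
  simp [hypGram]

@[simp]
theorem hypGram_one_zero (πF : F) (i : Fin s) : hypGram πF s (i, 1) (i, 0) = -πF⁻¹ := by
  simp [hypGram]

@[simp]
theorem hypGram_self (πF : F) (k : Fin s × Fin 2) : hypGram πF s k k = 0 := by
  obtain ⟨i, j⟩ := k
  fin_cases j <;> simp [hypGram]

theorem hypGram_of_ne (πF : F) {k l : Fin s × Fin 2} (hkl : k.1 ≠ l.1) :
    hypGram πF s k l = 0 := by
  simp [hypGram, hkl]

theorem map_hypGram {σ : F ≃+* F} {πF : F} (hσπ : σ πF = -πF) (k l : Fin s × Fin 2) :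
    σ (hypGram πF s k l) = hypGram πF s l k := by
  unfold hypGram
  split_ifs <;> simp_all [map_inv₀, inv_neg]

theorem sum_mul_hypGram_zero (πF : F) (a : Fin s × Fin 2 → F) (i : Fin s) :
    ∑ k, a k * hypGram πF s k (i, 0) = -(a (i, 1) * πF⁻¹) := by
  rw [Fintype.sum_prod_type,
    Finset.sum_eq_single i (fun j _ hj => by simp [hypGram, hj]) (by simp)]
  simp [Fin.sum_univ_two]

theorem sum_mul_hypGram_one (πF : F) (a : Fin s × Fin 2 → F) (i : Fin s) :
    ∑ k, a k * hypGram πF s k (i, 1) = a (i, 0) * πF⁻¹ := by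
  rw [Fintype.sum_prod_type,
    Finset.sum_eq_single i (fun j _ hj => by simp [hypGram, hj]) (by simp)]
  simp [Fin.sum_univ_two]

end HypGram

section BasisLemmas

variable {R M ι : Type*} [CommRing R] [AddCommGroup M] [Module R M]

theorem Irreducible.dvd_of_not_isUnit [IsDomain R] [IsDiscreteValuationRing R] {π : R}
    (hπ : Irreducible π) {x : R} (hx : ¬IsUnit x) : π ∣ x :=
  Ideal.mem_span_singleton.mp (hπ.maximalIdeal_eq ▸ (IsLocalRing.mem_maximalIdeal x).mpr hx)

theorem Module.Basis.exists_isUnit_repr [IsDomain R] [IsDiscreteValuationRing R] [Fintype ι]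
    (b : Basis ι R M) {π : R} (hπ : Irreducible π) {φ : M} (hφ : ¬∃ m : M, φ = π • m) :
    ∃ k, IsUnit (b.repr φ k) := by
  by_contra! hall
  choose m hm using fun k => hπ.dvd_of_not_isUnit (hall k)
  refine hφ ⟨∑ k, m k • b k, ?_⟩
  conv_lhs => rw [← b.sum_repr φ]
  simp only [Finset.smul_sum, smul_smul, hm]

theorem Module.Basis.exists_eq_of_forall_mem_span [Nontrivial R] [Fintype ι] (b : Basis ι R M)
    {v : ι → M} (hv : ∀ i, b i ∈ Submodule.span R (Set.range v)) :
    ∃ b' : Basis ι R M, ⇑b' = v := by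
  have hsp : ⊤ ≤ Submodule.span R (Set.range v) := by
    rw [← b.span_eq, Submodule.span_le]
    rintro _ ⟨i, rfl⟩
    exact hv i
  exact ⟨Basis.mk (linearIndependent_of_top_le_span_of_card_eq_finrank hsp
    (finrank_eq_card_basis b).symm) hsp, Basis.coe_mk _ _⟩

theorem Module.Basis.mem_of_isUnit_repr [Fintype ι] [DecidableEq ι] (b : Basis ι R M)
    {N : Submodule R M} {φ : M} {k : ι} (hu : IsUnit (b.repr φ k)) (hφ : φ ∈ N)
    (hN : ∀ l ≠ k, b l ∈ N) : b k ∈ N := by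
  have hsplit : b.repr φ k • b k + ∑ l ∈ Finset.univ.erase k, b.repr φ l • b l = φ := by
    rw [Finset.add_sum_erase _ (fun l => b.repr φ l • b l) (Finset.mem_univ k), b.sum_repr]
  rw [← N.smul_mem_iff_of_isUnit hu, eq_sub_of_add_eq hsplit]
  exact N.sub_mem hφ (N.sum_mem fun l hl => N.smul_mem _ (hN l (Finset.ne_of_mem_erase hl)))

theorem Module.Basis.exists_transvection [DecidableEq ι] (b : Basis ι R M) {i j : ι}
    (hij : i ≠ j) (c : R) :
    ∃ b' : Basis ι R M, (∀ k, b' k = if k = i then b i + c • b j else b k) ∧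
      ∀ x, b'.repr x j = b.repr x j - c * b.repr x i := by
  have hf : (c • b.coord i) (b j) = 0 := by simp [hij]
  refine ⟨b.map (LinearEquiv.transvection hf), fun k => ?_, fun x => ?_⟩
  · by_cases hk : k = i
    · simp [hk, LinearMap.transvection.apply]
    · simp [hk, LinearMap.transvection.apply, Ne.symm hk]
  · simp [LinearEquiv.transvection.symm_eq, LinearMap.transvection.apply, hij, sub_eq_add_neg]

theorem Module.Basis.span_range_ne_eq_ker_coord (b : Basis ι R M) (j : ι) :
    Submodule.span R (Set.range fun k : {k // k ≠ j} => b k) = LinearMap.ker (b.coord j) := by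
  ext x
  rw [Set.range_comp' b Subtype.val, Subtype.range_coe_subtype, b.mem_span_image,
    LinearMap.mem_ker, Basis.coord_apply]
  constructor
  · intro hx
    by_contra hxj
    exact hx (Finsupp.mem_support_iff.mpr hxj) rfl
  · intro hx k hk hkj
    exact Finsupp.mem_support_iff.mp hk (hkj ▸ hx)

theorem LinearMap.ker_sup_span_singleton (ℓ : M →ₗ[R] R) (φ : M) :
    LinearMap.ker ℓ ⊔ Submodule.span R {φ} = Submodule.comap ℓ (Ideal.span {ℓ φ}) := by
  refine le_antisymm (sup_le (fun x hx => ?_) ?_) fun x hx => ?_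
  · rw [Submodule.mem_comap, LinearMap.mem_ker.mp hx]
    exact zero_mem _
  · rw [Submodule.span_le, Set.singleton_subset_iff]
    exact Ideal.subset_span rfl
  · obtain ⟨a, ha⟩ := Ideal.mem_span_singleton'.mp hx
    refine Submodule.mem_sup.mpr ⟨x - a • φ, ?_, a • φ, Submodule.smul_mem _ _
      (Submodule.mem_span_singleton_self φ), sub_add_cancel x _⟩
    rw [LinearMap.mem_ker, ℓ.map_sub, ℓ.map_smul, smul_eq_mul, ha, sub_self]

end BasisLemmas

section StdNormal

variable {F O M : Type*} [Field F] [CommRing O] [AddCommGroup M] [Module O M] {s : ℕ}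

def IsStdNormal (h : M → M → F) (πF : F) (v : Fin s × Fin 2 → M) : Prop :=
  ∀ k l, h (v k) (v l) = hypGram πF s k l

namespace IsStdNormal

variable {σ : F ≃+* F} {h : M → M → F} {πF : F}

theorem reindex_blocks {b : Basis (Fin s × Fin 2) O M} (hb : IsStdNormal h πF b)
    (e : Equiv.Perm (Fin s)) :
    IsStdNormal h πF (b.reindex (e.prodCongr (Equiv.refl (Fin 2)))) := by
  intro k l
  rw [Basis.reindex_apply, Basis.reindex_apply, hb]
  simp [hypGram]

variable [Algebra O F]

theorem apply_eq_sum (hh : IsHermitianForm O σ h) {b : Basis (Fin s × Fin 2) O M}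
    (hb : IsStdNormal h πF b) (x : M) (l : Fin s × Fin 2) :
    h x (b l) = ∑ k, algebraMap O F (b.repr x k) * hypGram πF s k l := by
  conv_lhs => rw [← b.sum_repr x]
  rw [hh.sum_left]
  exact Finset.sum_congr rfl fun k _ => by rw [hh.smul_left, hb]

theorem apply_basis_zero (hh : IsHermitianForm O σ h) {b : Basis (Fin s × Fin 2) O M}
    (hb : IsStdNormal h πF b) (x : M) (i : Fin s) :
    h x (b (i, 0)) = -(algebraMap O F (b.repr x (i, 1)) * πF⁻¹) := by
  rw [hb.apply_eq_sum hh, sum_mul_hypGram_zero]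

theorem apply_basis_one (hh : IsHermitianForm O σ h) {b : Basis (Fin s × Fin 2) O M}
    (hb : IsStdNormal h πF b) (x : M) (i : Fin s) :
    h x (b (i, 1)) = algebraMap O F (b.repr x (i, 0)) * πF⁻¹ := by
  rw [hb.apply_eq_sum hh, sum_mul_hypGram_one]

theorem exists_basis_apply_eq (hh : IsHermitianForm O σ h) {b : Basis (Fin s × Fin 2) O M}
    (hb : IsStdNormal h πF b) (hσO : ∀ a : O, ∃ a', σ (algebraMap O F a) = algebraMap O F a')
    (hσπ : σ πF = -πF) (k : Fin s × Fin 2) (y : M) :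
    ∃ d : O, h (b k) y = algebraMap O F d * πF⁻¹ := by
  obtain ⟨i, j⟩ := k
  rw [hh.conj]
  fin_cases j
  · obtain ⟨d, hd⟩ := hσO (b.repr y (i, 1))
    refine ⟨d, ?_⟩
    simp [hb.apply_basis_zero hh, hd, hσπ, map_inv₀]
  · obtain ⟨d, hd⟩ := hσO (b.repr y (i, 0))
    refine ⟨-d, ?_⟩
    simp [hb.apply_basis_one hh, hd, hσπ, map_inv₀]

theorem of_block (hh : IsHermitianForm O σ h) (hσπ : σ πF = -πF) {v : Fin s × Fin 2 → M}
    (i : Fin s) (h00 : h (v (i, 0)) (v (i, 0)) = 0) (h01 : h (v (i, 0)) (v (i, 1)) = πF⁻¹)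
    (h11 : h (v (i, 1)) (v (i, 1)) = 0) (hperp0 : ∀ k, k.1 ≠ i → h (v k) (v (i, 0)) = 0)
    (hperp1 : ∀ k, k.1 ≠ i → h (v k) (v (i, 1)) = 0)
    (hrest : ∀ k l, k.1 ≠ i → l.1 ≠ i → h (v k) (v l) = hypGram πF s k l) :
    IsStdNormal h πF v := by
  have symm : ∀ k l, h (v k) (v l) = hypGram πF s k l → h (v l) (v k) = hypGram πF s l k :=
    fun k l hkl => by rw [hh.conj, hkl, map_hypGram hσπ]
  have hperp : ∀ k j, k.1 ≠ i → h (v k) (v (i, j)) = hypGram πF s k (i, j) := fun k j hk => by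
    rw [hypGram_of_ne _ hk]
    fin_cases j
    exacts [hperp0 k hk, hperp1 k hk]
  rintro ⟨k, j⟩ ⟨l, j'⟩
  by_cases hk : k = i <;> by_cases hl : l = i
  · subst hk hl
    fin_cases j <;> fin_cases j'
    exacts [h00.trans (hypGram_self _ _).symm, h01.trans (hypGram_zero_one _ _).symm,
      symm _ _ (h01.trans (hypGram_zero_one _ _).symm), h11.trans (hypGram_self _ _).symm]
  · subst hk
    exact symm _ _ (hperp (l, j') j hl)
  · subst hl
    exact hperp (k, j) j' hk
  · exact hrest _ _ hk hl

theorem exists_rotate (hh : IsHermitianForm O σ h) {b : Basis (Fin s × Fin 2) O M}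
    (hb : IsStdNormal h πF b) :
    ∃ b' : Basis (Fin s × Fin 2) O M,
      IsStdNormal h πF b' ∧ ∀ x i, b'.repr x (i, 0) = b.repr x (i, 1) := by
  -- `(e_i, f_i) ↦ (f_i, -e_i)` in every block
  refine ⟨(b.reindex ((Equiv.refl (Fin s)).prodCongr (Equiv.swap 0 1))).unitsSMul
    fun k => if k.2 = 1 then -1 else 1, ?_, fun x i => ?_⟩
  · rintro ⟨i, j⟩ ⟨i', j'⟩
    fin_cases j <;> fin_cases j' <;> simp only [Basis.unitsSMul_apply, Basis.reindex_apply] <;>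
      simp [hh.neg_left, hh.neg_right, hb _ _, hypGram] <;> split_ifs <;> simp
  · rw [Basis.repr_unitsSMul, Basis.repr_reindex_apply]
    simp

theorem exists_isUnit_repr (hh : IsHermitianForm O σ h) {b : Basis (Fin s × Fin 2) O M}
    (hb : IsStdNormal h πF b) {φ : M} {k : Fin s × Fin 2} (hk : IsUnit (b.repr φ k))
    (i : Fin s) :
    ∃ b' : Basis (Fin s × Fin 2) O M, IsStdNormal h πF b' ∧ IsUnit (b'.repr φ (i, 0)) := by
  obtain ⟨i₀, j⟩ := k
  obtain ⟨b₁, hb₁, hu⟩ : ∃ b₁ : Basis (Fin s × Fin 2) O M,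
      IsStdNormal h πF b₁ ∧ IsUnit (b₁.repr φ (i₀, 0)) := by
    fin_cases j
    · exact ⟨b, hb, hk⟩
    · obtain ⟨b₁, hb₁, hrepr⟩ := hb.exists_rotate hh
      exact ⟨b₁, hb₁, by simpa [hrepr] using hk⟩
  refine ⟨_, hb₁.reindex_blocks (Equiv.swap i i₀), ?_⟩
  rw [Basis.repr_reindex_apply]
  simpa using hu

end IsStdNormal

end StdNormal

section Splitting

variable {F O M : Type*} [Field F] [CommRing O] [Algebra O F] [AddCommGroup M]
  [Module O M] {s : ℕ} {σ : F ≃+* F} {h : M → M → F} {πF : F}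

theorem IsStdNormal.exists_isotropic_partner (hh : IsHermitianForm O σ h)
    (hA : Function.Injective (algebraMap O F))
    (hσO : ∀ a : O, ∃ a', σ (algebraMap O F a) = algebraMap O F a') (hσπ : σ πF = -πF)
    {b : Basis (Fin s × Fin 2) O M} (hb : IsStdNormal h πF b) {φ : M} {i : Fin s}
    (hu : IsUnit (b.repr φ (i, 0))) :
    ∃ τ : M, h τ τ = 0 ∧ h τ φ = -πF⁻¹ ∧ (∀ k ≠ (i, 0), h (b k) τ = 0) ∧
      b (i, 1) ∈ Submodule.span O {τ} := by
  obtain ⟨r', hr'⟩ := hu.exists_right_inv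
  obtain ⟨ρ, hρ⟩ := hσO (b.repr φ (i, 0))
  obtain ⟨ρ', hρ'⟩ := hσO r'
  have hσr : σ (algebraMap O F (b.repr φ (i, 0))) * σ (algebraMap O F r') = 1 := by
    rw [← map_mul, ← map_mul, hr', map_one, map_one]
  have hρρ' : ρ * ρ' = 1 := hA (by rw [map_mul, ← hρ, ← hρ', hσr, map_one])
  have hbτ : ∀ k ≠ (i, 0), h (b k) (ρ' • b (i, 1)) = 0 := by
    rintro ⟨k, j⟩ hk
    rw [hh.smul_right, hb, mul_eq_zero]
    right
    by_cases hki : k = i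
    · subst hki
      fin_cases j
      exacts [absurd rfl hk, hypGram_self _ _]
    · exact hypGram_of_ne _ hki
  refine ⟨ρ' • b (i, 1), ?_, ?_, hbτ, Submodule.mem_span_singleton.mpr ⟨ρ, ?_⟩⟩
  · rw [hh.smul_left, hbτ _ (by simp), mul_zero]
  · rw [hh.smul_left, hh.conj, hb.apply_basis_one hh, map_mul, map_inv₀, hσπ, ← hρ', inv_neg]
    linear_combination (-πF⁻¹) * hσr
  · rw [smul_smul, hρρ', one_smul]

/-- In block `i` sits the paper's hyperbolic pair `σ₁ = φ + c τ`, `τ₁ = τ`. -/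
def splitFamily (b : Fin s × Fin 2 → M) (i : Fin s) (φ τ : M) (c : O)
    (d : Fin s × Fin 2 → O) : Fin s × Fin 2 → M := fun k =>
  if k.1 = i then (if k.2 = 0 then φ + c • τ else τ) else b k + d k • τ

section splitFamily

variable {b : Fin s × Fin 2 → M} {i : Fin s} {φ τ : M} {c : O} {d : Fin s × Fin 2 → O}

@[simp]
theorem splitFamily_zero : splitFamily b i φ τ c d (i, 0) = φ + c • τ := by
  simp [splitFamily]

@[simp]
theorem splitFamily_one : splitFamily b i φ τ c d (i, 1) = τ := by
  simp [splitFamily]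

theorem splitFamily_of_ne {k : Fin s × Fin 2} (hk : k.1 ≠ i) :
    splitFamily b i φ τ c d k = b k + d k • τ := by
  simp [splitFamily, hk]

end splitFamily

theorem IsStdNormal.splitFamily (hh : IsHermitianForm O σ h) (hσπ : σ πF = -πF) (hπ : πF ≠ 0)
    {b : Fin s × Fin 2 → M} (hb : IsStdNormal h πF b) {i : Fin s} {φ τ : M} (hττ : h τ τ = 0)
    (hτφ : h τ φ = -πF⁻¹) (hbτ : ∀ k ≠ (i, 0), h (b k) τ = 0) {d : Fin s × Fin 2 → O}
    (hd : ∀ k, h (b k) φ = algebraMap O F (d k) * πF⁻¹) {c : O}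
    (hc : 2 * algebraMap O F c = πF * h φ φ) (hσc : σ (algebraMap O F c) = -algebraMap O F c) :
    IsStdNormal h πF (splitFamily b i φ τ c d) := by
  have hφτ : h φ τ = πF⁻¹ := by rw [hh.conj, hτφ, map_neg, map_inv₀, hσπ, inv_neg, neg_neg]
  have hne : ∀ k : Fin s × Fin 2, k.1 ≠ i → k ≠ (i, 0) := fun k hk hki => hk (by rw [hki])
  have hτb : ∀ k, k.1 ≠ i → h τ (b k) = 0 := fun k hk => by
    rw [hh.conj, hbτ k (hne k hk), map_zero]
  refine .of_block hh hσπ i ?_ ?_ ?_ (fun k hk => ?_) (fun k hk => ?_) (fun k l hk hl => ?_)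
  · rw [splitFamily_zero, hh.add_smul_left, hh.add_smul_right, hh.add_smul_right, hφτ, hτφ,
      hττ, hσc]
    linear_combination (-πF⁻¹) * hc - h φ φ * mul_inv_cancel₀ hπ
  · rw [splitFamily_zero, splitFamily_one, hh.add_smul_left, hφτ, hττ, mul_zero, add_zero]
  · rw [splitFamily_one, hττ]
  · rw [splitFamily_of_ne hk, splitFamily_zero, hh.add_smul_left, hh.add_smul_right,
      hh.add_smul_right, hd, hbτ k (hne k hk), hτφ, hττ]
    ring
  · rw [splitFamily_of_ne hk, splitFamily_one, hh.add_smul_left, hbτ k (hne k hk), hττ,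
      mul_zero, add_zero]
  · rw [splitFamily_of_ne hk, splitFamily_of_ne hl, hh.add_smul_left, hh.add_smul_right,
      hh.add_smul_right, hbτ k (hne k hk), hτb l hl, hττ, hb]
    ring

theorem Module.Basis.mem_span_splitFamily (b : Basis (Fin s × Fin 2) O M) {φ τ : M}
    {i : Fin s} (hu : IsUnit (b.repr φ (i, 0))) (hτ : b (i, 1) ∈ Submodule.span O {τ}) (c : O)
    (d : Fin s × Fin 2 → O) (k : Fin s × Fin 2) :
    b k ∈ Submodule.span O (Set.range (splitFamily b i φ τ c d)) := by
  set N := Submodule.span O (Set.range (splitFamily b i φ τ c d))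
  have hvN : ∀ k, splitFamily b i φ τ c d k ∈ N := fun k => Submodule.subset_span ⟨k, rfl⟩
  have hτN : τ ∈ N := by simpa using hvN (i, 1)
  have hφN : φ ∈ N := by
    rw [← add_sub_cancel_right φ (c • τ), ← splitFamily_zero (b := b) (d := d)]
    exact N.sub_mem (hvN _) (N.smul_mem _ hτN)
  have hnot0 : ∀ l ≠ (i, 0), b l ∈ N := by
    rintro ⟨l, j⟩ hl
    by_cases hli : l = i
    · subst hli
      fin_cases j
      · exact absurd rfl hl
      · exact Submodule.span_le.mpr (Set.singleton_subset_iff.mpr hτN) hτ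
    · rw [← add_sub_cancel_right (b (l, j)) (d (l, j) • τ), ← splitFamily_of_ne hli]
      exact N.sub_mem (hvN _) (N.smul_mem _ hτN)
  by_cases hk : k = (i, 0)
  · exact hk ▸ b.mem_of_isUnit_repr hu hφN hnot0
  · exact hnot0 k hk

theorem IsStdNormal.exists_eq_sub_smul [Nontrivial O] (hh : IsHermitianForm O σ h)
    (hA : Function.Injective (algebraMap O F))
    (hσO : ∀ a : O, ∃ a', σ (algebraMap O F a) = algebraMap O F a')
    (hσπ : σ πF = -πF) (hπ : πF ≠ 0) {b : Basis (Fin s × Fin 2) O M} (hb : IsStdNormal h πF b)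
    {φ : M} {i : Fin s} (hu : IsUnit (b.repr φ (i, 0))) {c : O}
    (hc : 2 * algebraMap O F c = πF * h φ φ) (hσc : σ (algebraMap O F c) = -algebraMap O F c) :
    ∃ b' : Basis (Fin s × Fin 2) O M, IsStdNormal h πF b' ∧ φ = b' (i, 0) - c • b' (i, 1) := by
  obtain ⟨τ, hττ, hτφ, hbτ, hτ⟩ := hb.exists_isotropic_partner hh hA hσO hσπ hu
  choose d hd using fun k => hb.exists_basis_apply_eq hh hσO hσπ k φ
  obtain ⟨b', hb'⟩ := b.exists_eq_of_forall_mem_span (b.mem_span_splitFamily hu hτ c d)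
  refine ⟨b', hb' ▸ hb.splitFamily hh hσπ hπ hττ hτφ hbτ hd hc hσc, ?_⟩
  rw [hb', splitFamily_zero, splitFamily_one, add_sub_cancel_right]

theorem IsStdNormal.exists_eq_sub_smul_of_primitive [IsDomain O] [IsDiscreteValuationRing O]
    (hh : IsHermitianForm O σ h) (hA : Function.Injective (algebraMap O F))
    (hσO : ∀ a : O, ∃ a', σ (algebraMap O F a) = algebraMap O F a') {π : O}
    (hπ : Irreducible π) (hσπ : σ (algebraMap O F π) = -algebraMap O F π)
    {b : Basis (Fin s × Fin 2) O M} (hb : IsStdNormal h (algebraMap O F π) b) {φ : M}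
    (hφ : ¬∃ m : M, φ = π • m) (i : Fin s) {c : O}
    (hc : 2 * algebraMap O F c = algebraMap O F π * h φ φ)
    (hσc : σ (algebraMap O F c) = -algebraMap O F c) :
    ∃ b' : Basis (Fin s × Fin 2) O M,
      IsStdNormal h (algebraMap O F π) b' ∧ φ = b' (i, 0) - c • b' (i, 1) := by
  obtain ⟨k, hk⟩ := b.exists_isUnit_repr hπ hφ
  obtain ⟨b₀, hb₀, hu⟩ := hb.exists_isUnit_repr hh hk i
  exact hb₀.exists_eq_sub_smul hh hA hσO hσπ ((map_ne_zero_iff _ hA).mpr hπ.ne_zero) hu hc hσc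

theorem IsStdNormal.orthoSubmodule_eq_ker (hh : IsHermitianForm O σ h)
    {haddl : ∀ x y z : M, h (x + y) z = h x z + h y z}
    {hsmull : ∀ (a : O) (x y : M), h (a • x) y = algebraMap O F a * h x y}
    (hA : Function.Injective (algebraMap O F)) (hπ : πF ≠ 0) {b : Basis (Fin s × Fin 2) O M}
    (hb : IsStdNormal h πF b) {i : Fin s} {c : O}
    (hσc : σ (algebraMap O F c) = -algebraMap O F c) {b'' : Basis (Fin s × Fin 2) O M}
    (hb'' : ∀ x, b''.repr x (i, 1) = b.repr x (i, 1) - c * b.repr x (i, 0)) :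
    orthoSubmodule h haddl hsmull (b (i, 0) - c • b (i, 1)) =
      LinearMap.ker (b''.coord (i, 1)) := by
  ext x
  rw [LinearMap.mem_ker, Basis.coord_apply, hb'', sub_eq_zero]
  change h x (b (i, 0) - c • b (i, 1)) = 0 ↔ _
  rw [hh.sub_right, hh.smul_right, hσc, hb.apply_basis_zero hh, hb.apply_basis_one hh,
    show ∀ u v w : F, -(u * πF⁻¹) - -v * (w * πF⁻¹) = (v * w - u) * πF⁻¹ by intros; ring,
    ← map_mul, mul_eq_zero, inv_eq_zero, or_iff_left hπ, sub_eq_zero, hA.eq_iff, eq_comm]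

end Splitting

section Length

variable {O M : Type*} [CommRing O] [IsDomain O] [IsDiscreteValuationRing O] [AddCommGroup M]
  [Module O M] {π : O}

theorem Submodule.span_smul_covBy_span (hπ : Irreducible π) {y : M}
    (hy : y ∉ Submodule.span O {π • y}) : Submodule.span O {π • y} ⋖ Submodule.span O {y} := by
  refine ⟨lt_of_le_of_ne (Submodule.span_singleton_smul_le _ _ _) fun heq =>
    hy (heq ▸ Submodule.mem_span_singleton_self y), fun C hAC hCB => ?_⟩
  obtain ⟨z, hzC, hzA⟩ := SetLike.exists_of_lt hAC
  obtain ⟨t, rfl⟩ := Submodule.mem_span_singleton.mp (hCB.le hzC)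
  by_cases ht : IsUnit t
  · refine hCB.not_ge ?_
    rw [Submodule.span_le, Set.singleton_subset_iff]
    exact (C.smul_mem_iff_of_isUnit ht).mp hzC
  · obtain ⟨t', rfl⟩ := hπ.dvd_of_not_isUnit ht
    rw [mul_comm, mul_smul] at hzA
    exact hzA (Submodule.smul_mem _ _ (Submodule.mem_span_singleton_self _))

theorem moduleLengthEq_of_span_singleton_eq_top (hπ : Irreducible π) {g : M}
    (hg : Submodule.span O {g} = ⊤) {n : ℕ} (hann : ∀ x : O, x • g = 0 ↔ π ^ n ∣ x) :
    moduleLengthEq O M n := by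
  have hnot : ∀ m < n, π ^ m • g ∉ Submodule.span O {π • π ^ m • g} := by
    intro m hm hmem
    obtain ⟨x, hx⟩ := Submodule.mem_span_singleton.mp hmem
    have h0 : ((1 - x * π) * π ^ m) • g = 0 := by
      rw [mul_smul, sub_smul, one_smul, mul_smul, hx, sub_self]
    have hunit : IsUnit (1 - x * π) :=
      (IsLocalRing.isUnit_or_isUnit_one_sub_self (x * π)).resolve_left fun hu =>
        hπ.not_isUnit (isUnit_of_mul_isUnit_right hu)
    have hdvd := hunit.dvd_mul_left.mp ((hann _).mp h0)
    exact absurd ((pow_dvd_pow_iff hπ.ne_zero hπ.not_isUnit).mp hdvd) (by omega)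
  refine ⟨⟨n, fun k => Submodule.span O {π ^ (n - k) • g}, fun k => ?_⟩, ?_, ?_, rfl⟩
  · change Submodule.span O {π ^ (n - k) • g} ⋖ Submodule.span O {π ^ (n - (k + 1)) • g}
    rw [show n - k = n - (k + 1) + 1 by omega, pow_succ', mul_smul]
    exact Submodule.span_smul_covBy_span hπ (hnot _ (by omega))
  · change Submodule.span O {π ^ (n - 0) • g} = ⊥
    simp [(hann _).mpr dvd_rfl]
  · change Submodule.span O {π ^ (n - n) • g} = ⊤
    simpa using hg

theorem moduleLengthEq_quotient_comap (hπ : Irreducible π) (ℓ : M →ₗ[O] O) {v : M}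
    (hv : ℓ v = 1) (n : ℕ) :
    moduleLengthEq O (M ⧸ Submodule.comap ℓ (Ideal.span {π ^ n})) n := by
  refine moduleLengthEq_of_span_singleton_eq_top hπ (g := Submodule.Quotient.mk v) ?_
    fun x => ?_
  · rw [eq_top_iff]
    rintro q -
    obtain ⟨m, rfl⟩ := Submodule.Quotient.mk_surjective _ q
    refine Submodule.mem_span_singleton.mpr ⟨ℓ m, ?_⟩
    rw [← Submodule.Quotient.mk_smul, Submodule.Quotient.eq, Submodule.mem_comap, ℓ.map_sub,
      ℓ.map_smul, hv, smul_eq_mul, mul_one, sub_self]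
    exact zero_mem _
  · rw [← Submodule.Quotient.mk_smul, Submodule.Quotient.mk_eq_zero, Submodule.mem_comap,
      ℓ.map_smul, hv, smul_eq_mul, mul_one, Ideal.mem_span_singleton]

theorem exists_pow_smul_mem_comap (hπ : Irreducible π) (ℓ : M →ₗ[O] O) {a : O} (ha : a ≠ 0)
    (x : M) : ∃ k : ℕ, π ^ k • x ∈ Submodule.comap ℓ (Ideal.span {a}) := by
  obtain ⟨k, u, hu⟩ := IsDiscreteValuationRing.eq_unit_mul_pow_irreducible ha hπ
  refine ⟨k, ?_⟩
  rw [Submodule.mem_comap, ℓ.map_smul, smul_eq_mul, Ideal.mem_span_singleton, hu,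
    Units.mul_left_dvd]
  exact dvd_mul_right _ _

end Length

theorem stmt_1_general
    -- the ramified quadratic setting
    {F O : Type*} [Field F] [CommRing O] [IsDomain O] [IsDiscreteValuationRing O]
    [Algebra O F] [IsFractionRing O F]
    (σ : F ≃+* F)
    (hσO : ∀ a : O, ∃ b : O, σ (algebraMap O F a) = algebraMap O F b)
    (π : O) (hπ : Irreducible π)
    (hσπ : σ (algebraMap O F π) = - algebraMap O F π)
    (h2 : IsUnit (2 : O))
    -- the hermitian lattice M = H^s
    {M : Type*} [AddCommGroup M] [Module O M]
    (h : M → M → F)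
    (haddl : ∀ x y z : M, h (x + y) z = h x z + h y z)
    (hsmull : ∀ (a : O) (x y : M), h (a • x) y = algebraMap O F a * h x y)
    (hconj : ∀ x y : M, h y x = σ (h x y))
    (s : ℕ) (hs : 0 < s)
    (b : Module.Basis (Fin s × Fin 2) O M)
    (hb : ∀ i j, h (b i) (b j) = hypGram (algebraMap O F π) s i j)
    -- φ ∈ M ∖ πM and β := h(φ,φ) ∈ O_{F₀}
    (φ : M) (hφ : ¬ ∃ m : M, φ = π • m)
    (β : O) (hβ : algebraMap O F β = h φ φ) :
    -- conclusion
    ∃ b' : Module.Basis (Fin s × Fin 2) O M,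
      (∀ i j, h (b' i) (b' j) = hypGram (algebraMap O F π) s i j) ∧
      -- φ = σ₁ - (πβ/2)·τ₁
      φ = b' (⟨0, hs⟩, 0) - (π * β * ((h2.unit⁻¹ : Oˣ) : O)) • b' (⟨0, hs⟩, 1) ∧
      -- σ₁ + (πβ/2)·τ₁, σ₂, τ₂, …, σ_s, τ_s is an O-basis of M(φ)
      (∀ w : {x : Fin s × Fin 2 // x ≠ (⟨0, hs⟩, (1 : Fin 2))} → M,
        w = (fun x => if x.1 = (⟨0, hs⟩, (0 : Fin 2)) then
              b' (⟨0, hs⟩, 0) + (π * β * ((h2.unit⁻¹ : Oˣ) : O)) • b' (⟨0, hs⟩, 1)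
            else b' x.1) →
        (∀ i, w i ∈ orthoSubmodule h haddl hsmull φ) ∧
        LinearIndependent O w ∧
        Submodule.span O (Set.range w) = orthoSubmodule h haddl hsmull φ) ∧
      -- if β ≠ 0, the colength of M(φ) ⊞ O·φ in M is 1 + val_π(β)
      (∀ a : ℕ, Associated (π ^ a) β →
        moduleLengthEq O
          (M ⧸ ((orthoSubmodule h haddl hsmull φ) ⊔ Submodule.span O {φ}))
          (1 + a)) ∧
      -- and (M(φ) ⊗ F) ⊞ F·φ = M ⊗ F
      (β ≠ 0 → ∀ x : M, ∃ k : ℕ,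
        π ^ k • x ∈ (orthoSubmodule h haddl hsmull φ) ⊔ Submodule.span O {φ}) := by
  have hh : IsHermitianForm O σ h := ⟨haddl, hsmull, hconj⟩
  have hA := IsFractionRing.injective O F
  set c := π * β * ((h2.unit⁻¹ : Oˣ) : O)
  have h2c : 2 * c = π * β := by rw [mul_comm, mul_assoc, h2.val_inv_mul, mul_one]
  have hc : 2 * algebraMap O F c = algebraMap O F π * h φ φ := by
    rw [← hβ, ← map_ofNat (algebraMap O F) 2, ← map_mul, h2c, map_mul]
  have hσc := hh.map_eq_neg_of_two_mul
    (by simpa only [map_ofNat] using (h2.map (algebraMap O F)).ne_zero) hσπ hc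
  obtain ⟨b', hb', hφ'⟩ :=
    IsStdNormal.exists_eq_sub_smul_of_primitive hh hA hσO hπ hσπ hb hφ ⟨0, hs⟩ hc hσc
  obtain ⟨b'', hb''_apply, hb''_repr⟩ :=
    b'.exists_transvection (i := (⟨0, hs⟩, 0)) (j := (⟨0, hs⟩, 1)) (by simp) c
  have hortho : orthoSubmodule h haddl hsmull φ = LinearMap.ker (b''.coord (⟨0, hs⟩, 1)) := by
    subst hφ'
    exact hb'.orthoSubmodule_eq_ker hh hA ((map_ne_zero_iff _ hA).mpr hπ.ne_zero) hσc hb''_repr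
  have hℓφ : b''.coord (⟨0, hs⟩, 1) φ = -(π * β) := by
    rw [Basis.coord_apply, hb''_repr, hφ', ← h2c]
    simp
    ring
  have hS : orthoSubmodule h haddl hsmull φ ⊔ Submodule.span O {φ} =
      Submodule.comap (b''.coord (⟨0, hs⟩, 1)) (Ideal.span {π * β}) := by
    rw [hortho, LinearMap.ker_sup_span_singleton, hℓφ, Ideal.span_singleton_neg]
  refine ⟨b', hb', hφ', ?_, fun a ha => ?_, fun hβ0 x => ?_⟩
  · intro w hw
    obtain rfl : w = fun x => b'' x.1 := hw.trans (funext fun x => (hb''_apply x.1).symm)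
    rw [hortho, ← b''.span_range_ne_eq_ker_coord]
    exact ⟨fun x => Submodule.subset_span ⟨x, rfl⟩,
      b''.linearIndependent.comp _ Subtype.val_injective, rfl⟩
  · rw [hS, Ideal.span_singleton_eq_span_singleton.mpr (ha.mul_left π).symm, ← pow_succ', add_comm]
    exact moduleLengthEq_quotient_comap hπ _ (v := b'' (⟨0, hs⟩, 1)) (by simp) _
  · rw [hS]
    exact exists_pow_smul_mem_comap hπ _ (mul_ne_zero hπ.ne_zero hβ0) x

theorem stmt_1
    -- the ramified quadratic setting
    {F O : Type*} [Field F] [CommRing O] [IsDomain O] [IsDiscreteValuationRing O]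
    [Algebra O F] [IsFractionRing O F]
    (σ : F ≃+* F) (hσinv : ∀ x : F, σ (σ x) = x) (hσne : σ ≠ RingEquiv.refl F)
    (hσO : ∀ a : O, ∃ b : O, σ (algebraMap O F a) = algebraMap O F b)
    (π : O) (hπ : Irreducible π)
    (hσπ : σ (algebraMap O F π) = - algebraMap O F π)
    (h2 : IsUnit (2 : O))
    -- the hermitian lattice M = H^s
    {M : Type*} [AddCommGroup M] [Module O M]
    (h : M → M → F)
    (haddl : ∀ x y z : M, h (x + y) z = h x z + h y z)
    (hsmull : ∀ (a : O) (x y : M), h (a • x) y = algebraMap O F a * h x y)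
    (hconj : ∀ x y : M, h y x = σ (h x y))
    (s : ℕ) (hs : 0 < s)
    (b : Module.Basis (Fin s × Fin 2) O M)
    (hb : ∀ i j, h (b i) (b j) = hypGram (algebraMap O F π) s i j)
    -- φ ∈ M ∖ πM and β := h(φ,φ) ∈ O_{F₀}
    (φ : M) (hφ : ¬ ∃ m : M, φ = π • m)
    (β : O) (hβ : algebraMap O F β = h φ φ)
    (hβfix : σ (algebraMap O F β) = algebraMap O F β) :
    -- conclusion
    ∃ b' : Module.Basis (Fin s × Fin 2) O M,
      (∀ i j, h (b' i) (b' j) = hypGram (algebraMap O F π) s i j) ∧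
      -- φ = σ₁ - (πβ/2)·τ₁
      φ = b' (⟨0, hs⟩, 0) - (π * β * ((h2.unit⁻¹ : Oˣ) : O)) • b' (⟨0, hs⟩, 1) ∧
      -- σ₁ + (πβ/2)·τ₁, σ₂, τ₂, …, σ_s, τ_s is an O-basis of M(φ)
      (∀ w : {x : Fin s × Fin 2 // x ≠ (⟨0, hs⟩, (1 : Fin 2))} → M,
        w = (fun x => if x.1 = (⟨0, hs⟩, (0 : Fin 2)) then
              b' (⟨0, hs⟩, 0) + (π * β * ((h2.unit⁻¹ : Oˣ) : O)) • b' (⟨0, hs⟩, 1)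
            else b' x.1) →
        (∀ i, w i ∈ orthoSubmodule h haddl hsmull φ) ∧
        LinearIndependent O w ∧
        Submodule.span O (Set.range w) = orthoSubmodule h haddl hsmull φ) ∧
      -- if β ≠ 0, the colength of M(φ) ⊞ O·φ in M is 1 + val_π(β)
      (∀ a : ℕ, Associated (π ^ a) β →
        moduleLengthEq O
          (M ⧸ ((orthoSubmodule h haddl hsmull φ) ⊔ Submodule.span O {φ}))
          (1 + a)) ∧
      -- and (M(φ) ⊗ F) ⊞ F·φ = M ⊗ F
      (β ≠ 0 → ∀ x : M, ∃ k : ℕ,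
        π ^ k • x ∈ (orthoSubmodule h haddl hsmull φ) ⊔ Submodule.span O {φ}) :=
  stmt_1_general σ hσO π hπ hσπ h2 h haddl hsmull hconj s hs b hb φ hφ β hβ
end
end

section
/- Let s ≥ 1, let M = H^s, let d ≥ 1, and let x ∈ M with h(x,x) ∈ O_{F₀}^×. Then for every y ∈ M with h(y,x) ∈ π^{2d−1}O_F there exists z ∈ M(x) = {w ∈ M : h(w,x) = 0} with y − z ∈ π^{2d}M. Consequently, the natural map M(x)/π^{2d}M(x) → M/π^{2d}M is injective with image exactly the set of classes ȳ ∈ M/π^{2d}M whose pairing with the class of x vanishes in π^{−1}O_F/π^{2d−1}O_F. -/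
noncomputable section

/-! Because `h(x,x)` is a unit and `h(M,M) ⊆ π⁻¹O_F`, `x ∉ πM`, so some coordinate of `x` in the
hyperbolic basis is a unit; pairing `x` with a multiple of the partner basis vector produces
`m₀ ∈ M` with `h(m₀,x) = π⁻¹`. If `h(y,x) = π^{2d-1}a`, then `z = y - π^{2d}a•m₀` lies in `M(x)`.
Conversely `h(π^{2d}m, x) ∈ π^{2d-1}O_F` by integrality, and `h(π^{2d}w, x) = 0` forces
`h(w,x) = 0`. -/

open Module

section LinearFunctional

variable {O F M : Type*} [CommRing O] [Field F] [Algebra O F] [AddCommGroup M] [Module O M]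
  (ℓ : M →ₗ[O] F) {π : O}

theorem LinearMap.exists_mem_ker_sub_eq_pow_smul (hπ : algebraMap O F π ≠ 0) {m₀ : M}
    (hm₀ : ℓ m₀ = (algebraMap O F π)⁻¹) (n : ℕ) {y : M} {a : O}
    (hy : ℓ y = algebraMap O F (π ^ n) * algebraMap O F a) :
    ∃ z, ℓ z = 0 ∧ ∃ m, y - z = π ^ (n + 1) • m := by
  refine ⟨y - (π ^ (n + 1) * a) • m₀, ?_, a • m₀, by rw [sub_sub_cancel, mul_smul]⟩
  rw [map_sub, map_smul, Algebra.smul_def, hy, hm₀]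
  simp only [map_mul, map_pow]
  field_simp
  ring

theorem LinearMap.apply_eq_zero_of_apply_smul_eq_zero {c : O} (hc : algebraMap O F c ≠ 0)
    {m : M} (hm : ℓ (c • m) = 0) : ℓ m = 0 := by
  rw [map_smul, Algebra.smul_def] at hm
  exact (mul_eq_zero.mp hm).resolve_left hc

theorem LinearMap.exists_apply_eq_pow_mul_of_sub_eq_pow_smul
    (hint : ∀ m, ℓ m * algebraMap O F π ∈ (algebraMap O F).range)
    {y z m : M} (hz : ℓ z = 0) (n : ℕ) (hyz : y - z = π ^ (n + 1) • m) :
    ∃ a : O, ℓ y = algebraMap O F (π ^ n) * algebraMap O F a := by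
  obtain ⟨a, ha⟩ := hint m
  refine ⟨a, ?_⟩
  rw [← sub_add_cancel y z, map_add, hyz, hz, map_smul, Algebra.smul_def, ha]
  simp only [map_pow]
  field_simp
  ring

end LinearFunctional

theorem Module.Basis.exists_eq_smul_of_forall_not_isUnit_repr {O M ι : Type*} [CommRing O]
    [IsLocalRing O] [AddCommGroup M] [Module O M] [Fintype ι] (b : Basis ι O M) {π : O}
    (hπ : IsLocalRing.maximalIdeal O = Ideal.span {π}) {x : M}
    (hx : ∀ i, ¬IsUnit (b.repr x i)) : ∃ x', x = π • x' := by
  have hdvd : ∀ i, π ∣ b.repr x i := fun i => by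
    rw [← Ideal.mem_span_singleton, ← hπ]
    exact (IsLocalRing.mem_maximalIdeal _).mpr (hx i)
  choose e he using hdvd
  refine ⟨∑ i, e i • b i, ?_⟩
  conv_lhs => rw [← b.sum_repr x]
  simp only [Finset.smul_sum, smul_smul, he]

section SesquilinearPairing

variable {O F M : Type*} [CommRing O] [Field F] [Algebra O F] [AddCommGroup M] [Module O M]
  {h : M → M → F}

def pairingLeft (haddl : ∀ x y z : M, h (x + y) z = h x z + h y z)
    (hsmull : ∀ (a : O) (x y : M), h (a • x) y = algebraMap O F a * h x y) (x : M) :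
    M →ₗ[O] F where
  toFun m := h m x
  map_add' m n := haddl m n x
  map_smul' a m := by rw [hsmull, RingHom.id_apply, Algebra.smul_def]

theorem pairing_eq_sum_repr {ι : Type*} [Fintype ι]
    (haddl : ∀ x y z : M, h (x + y) z = h x z + h y z)
    (hsmull : ∀ (a : O) (x y : M), h (a • x) y = algebraMap O F a * h x y)
    (b : Basis ι O M) (m n : M) :
    h m n = ∑ i, algebraMap O F (b.repr m i) * h (b i) n := by
  change pairingLeft haddl hsmull n m =
    ∑ i, algebraMap O F (b.repr m i) * pairingLeft haddl hsmull n (b i)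
  conv_lhs => rw [← b.sum_repr m]
  simp only [map_sum, map_smul, Algebra.smul_def]

end SesquilinearPairing

section HyperbolicLattice

variable {O F M : Type*} [CommRing O] [Field F] [Algebra O F] [AddCommGroup M] [Module O M]
  {h : M → M → F} {ϖ : F} {s : ℕ} {b : Basis (Fin s × Fin 2) O M}

theorem pairing_basis_zero_right
    (haddl : ∀ x y z : M, h (x + y) z = h x z + h y z)
    (hsmull : ∀ (a : O) (x y : M), h (a • x) y = algebraMap O F a * h x y)
    (hb : ∀ i j, h (b i) (b j) = hypGram ϖ s i j) (n : M) (k : Fin s) :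
    h n (b (k, 0)) = -(algebraMap O F (b.repr n (k, 1)) * ϖ⁻¹) := by
  rw [pairing_eq_sum_repr haddl hsmull b, Finset.sum_eq_single (k, 1)]
  · simp [hb, hypGram]
  · rintro ⟨j, t⟩ - hj
    fin_cases t
    · simp [hb, hypGram]
    · have hjk : j ≠ k := fun hjk => hj (by simp [hjk])
      simp [hb, hypGram, hjk]
  · simp

theorem pairing_basis_one_right
    (haddl : ∀ x y z : M, h (x + y) z = h x z + h y z)
    (hsmull : ∀ (a : O) (x y : M), h (a • x) y = algebraMap O F a * h x y)
    (hb : ∀ i j, h (b i) (b j) = hypGram ϖ s i j) (n : M) (k : Fin s) :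
    h n (b (k, 1)) = algebraMap O F (b.repr n (k, 0)) * ϖ⁻¹ := by
  rw [pairing_eq_sum_repr haddl hsmull b, Finset.sum_eq_single (k, 0)]
  · simp [hb, hypGram]
  · rintro ⟨j, t⟩ - hj
    fin_cases t
    · have hjk : j ≠ k := fun hjk => hj (by simp [hjk])
      simp [hb, hypGram, hjk]
    · simp [hb, hypGram]
  · simp

theorem pairing_basis_zero_left
    (haddl : ∀ x y z : M, h (x + y) z = h x z + h y z)
    (hsmull : ∀ (a : O) (x y : M), h (a • x) y = algebraMap O F a * h x y)
    {σ : F ≃+* F} (hconj : ∀ x y : M, h y x = σ (h x y)) (hσϖ : σ ϖ = -ϖ)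
    (hb : ∀ i j, h (b i) (b j) = hypGram ϖ s i j) (n : M) (k : Fin s) :
    h (b (k, 0)) n = σ (algebraMap O F (b.repr n (k, 1))) * ϖ⁻¹ := by
  rw [hconj, pairing_basis_zero_right haddl hsmull hb, map_neg, map_mul, map_inv₀, hσϖ, inv_neg,
    mul_neg, neg_neg]

theorem pairing_basis_one_left
    (haddl : ∀ x y z : M, h (x + y) z = h x z + h y z)
    (hsmull : ∀ (a : O) (x y : M), h (a • x) y = algebraMap O F a * h x y)
    {σ : F ≃+* F} (hconj : ∀ x y : M, h y x = σ (h x y)) (hσϖ : σ ϖ = -ϖ)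
    (hb : ∀ i j, h (b i) (b j) = hypGram ϖ s i j) (n : M) (k : Fin s) :
    h (b (k, 1)) n = -(σ (algebraMap O F (b.repr n (k, 0))) * ϖ⁻¹) := by
  rw [hconj, pairing_basis_one_right haddl hsmull hb, map_mul, map_inv₀, hσϖ, inv_neg, mul_neg]

theorem pairing_mul_mem_range
    (haddl : ∀ x y z : M, h (x + y) z = h x z + h y z)
    (hsmull : ∀ (a : O) (x y : M), h (a • x) y = algebraMap O F a * h x y)
    {σ : F ≃+* F} (hconj : ∀ x y : M, h y x = σ (h x y))
    (hσO : ∀ a : O, ∃ c : O, σ (algebraMap O F a) = algebraMap O F c)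
    (hϖ : ϖ ≠ 0) (hσϖ : σ ϖ = -ϖ)
    (hb : ∀ i j, h (b i) (b j) = hypGram ϖ s i j) (m n : M) :
    h m n * ϖ ∈ (algebraMap O F).range := by
  have hσ : ∀ a : O, σ (algebraMap O F a) ∈ (algebraMap O F).range := fun a => by
    obtain ⟨c, hc⟩ := hσO a
    exact ⟨c, hc.symm⟩
  have hbasis : ∀ i, h (b i) n * ϖ ∈ (algebraMap O F).range := by
    rintro ⟨k, t⟩
    fin_cases t
    · simpa [pairing_basis_zero_left haddl hsmull hconj hσϖ hb, hϖ] using hσ _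
    · simpa [pairing_basis_one_left haddl hsmull hconj hσϖ hb, hϖ] using
        neg_mem (hσ (b.repr n (k, 0)))
  rw [pairing_eq_sum_repr haddl hsmull b, Finset.sum_mul]
  exact Subring.sum_mem _ fun i _ => by
    rw [mul_assoc]
    exact mul_mem ⟨_, rfl⟩ (hbasis i)

theorem exists_pairing_eq_inv_of_isUnit_repr
    (haddl : ∀ x y z : M, h (x + y) z = h x z + h y z)
    (hsmull : ∀ (a : O) (x y : M), h (a • x) y = algebraMap O F a * h x y)
    {σ : F ≃+* F} (hconj : ∀ x y : M, h y x = σ (h x y))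
    (hσO : ∀ a : O, ∃ c : O, σ (algebraMap O F a) = algebraMap O F c) (hσϖ : σ ϖ = -ϖ)
    (hb : ∀ i j, h (b i) (b j) = hypGram ϖ s i j) {x : M} {i : Fin s × Fin 2}
    (hi : IsUnit (b.repr x i)) : ∃ m₀, h m₀ x = ϖ⁻¹ := by
  obtain ⟨r, hr⟩ := hi.exists_right_inv
  obtain ⟨c, hc⟩ := hσO r
  have hσc : σ (algebraMap O F (b.repr x i)) * algebraMap O F c = 1 := by
    rw [← hc, ← map_mul, ← map_mul, hr, map_one, map_one]
  obtain ⟨k, t⟩ := i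
  fin_cases t <;> simp only [Fin.zero_eta, Fin.mk_one, Fin.isValue] at hσc
  · refine ⟨(-c) • b (k, 1), ?_⟩
    rw [hsmull, pairing_basis_one_left haddl hsmull hconj hσϖ hb, map_neg]
    linear_combination ϖ⁻¹ * hσc
  · refine ⟨c • b (k, 0), ?_⟩
    rw [hsmull, pairing_basis_zero_left haddl hsmull hconj hσϖ hb]
    linear_combination ϖ⁻¹ * hσc

theorem exists_isUnit_repr_of_isUnit_pairing_self [IsLocalRing O]
    (hinj : Function.Injective (algebraMap O F))
    (haddl : ∀ x y z : M, h (x + y) z = h x z + h y z)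
    (hsmull : ∀ (a : O) (x y : M), h (a • x) y = algebraMap O F a * h x y)
    {σ : F ≃+* F} (hconj : ∀ x y : M, h y x = σ (h x y))
    (hσO : ∀ a : O, ∃ c : O, σ (algebraMap O F a) = algebraMap O F c)
    {π : O} (hπ : IsLocalRing.maximalIdeal O = Ideal.span {π}) (hπ0 : algebraMap O F π ≠ 0)
    (hσπ : σ (algebraMap O F π) = -algebraMap O F π)
    (hb : ∀ i j, h (b i) (b j) = hypGram (algebraMap O F π) s i j)
    {x : M} {u : O} (hu : IsUnit u) (hx : algebraMap O F u = h x x) :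
    ∃ i, IsUnit (b.repr x i) := by
  by_contra! hnonunit
  obtain ⟨x', rfl⟩ := b.exists_eq_smul_of_forall_not_isUnit_repr hπ hnonunit
  obtain ⟨a, ha⟩ :=
    pairing_mul_mem_range haddl hsmull hconj hσO hπ0 hσπ hb x' x'
  have hself : σ (h x' x') = h x' x' := (hconj x' x').symm
  have hux : u = -(π * a) := hinj <| by
    rw [hx, hsmull, hconj, hsmull, map_mul, hσπ, hself, map_neg, map_mul, ha]
    ring
  have hπunit : IsUnit π := isUnit_of_dvd_unit ⟨-a, by rw [hux]; ring⟩ hu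
  exact (IsLocalRing.mem_maximalIdeal π).mp (hπ ▸ Ideal.mem_span_singleton_self π) hπunit

end HyperbolicLattice

theorem stmt_4_general
    -- the ramified quadratic setting
    {F O : Type*} [Field F] [CommRing O] [IsDomain O] [IsDiscreteValuationRing O]
    [Algebra O F] [IsFractionRing O F]
    (σ : F ≃+* F)
    (hσO : ∀ a : O, ∃ b : O, σ (algebraMap O F a) = algebraMap O F b)
    (π : O) (hπ : Irreducible π)
    (hσπ : σ (algebraMap O F π) = - algebraMap O F π)
    -- the hermitian lattice M = H^s
    {M : Type*} [AddCommGroup M] [Module O M]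
    (h : M → M → F)
    (haddl : ∀ x y z : M, h (x + y) z = h x z + h y z)
    (hsmull : ∀ (a : O) (x y : M), h (a • x) y = algebraMap O F a * h x y)
    (hconj : ∀ x y : M, h y x = σ (h x y))
    (s : ℕ)
    (b : Module.Basis (Fin s × Fin 2) O M)
    (hb : ∀ i j, h (b i) (b j) = hypGram (algebraMap O F π) s i j)
    -- d ≥ 1 and x ∈ M with h(x,x) ∈ O_{F₀}^×
    (d : ℕ) (hd : 1 ≤ d)
    (x : M) (hx : ∃ u : O, IsUnit u ∧ algebraMap O F u = h x x) :
    -- every y with h(y,x) ∈ π^{2d-1}O_F is congruent mod π^{2d}M to an element of M(x)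
    (∀ y : M,
      (∃ a : O, h y x = algebraMap O F (π ^ (2 * d - 1)) * algebraMap O F a) →
      ∃ z : M, h z x = 0 ∧ ∃ m : M, y - z = π ^ (2 * d) • m) ∧
    -- injectivity of M(x)/π^{2d}M(x) → M/π^{2d}M
    (∀ z : M, h z x = 0 → (∃ m : M, z = π ^ (2 * d) • m) →
      ∃ w : M, h w x = 0 ∧ z = π ^ (2 * d) • w) ∧
    -- the image consists exactly of the classes ȳ pairing to zero with x̄
    (∀ y : M,
      (∃ z : M, h z x = 0 ∧ ∃ m : M, y - z = π ^ (2 * d) • m) ↔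
      (∃ a : O, h y x = algebraMap O F (π ^ (2 * d - 1)) * algebraMap O F a)) := by
  have hinj := IsFractionRing.injective O F
  have hπ0 : algebraMap O F π ≠ 0 := (map_ne_zero_iff _ hinj).mpr hπ.ne_zero
  have hmax := (IsDiscreteValuationRing.irreducible_iff_uniformizer π).mp hπ
  obtain ⟨u, hu, hux⟩ := hx
  obtain ⟨i, hi⟩ := exists_isUnit_repr_of_isUnit_pairing_self hinj haddl hsmull hconj hσO hmax
    hπ0 hσπ hb hu hux
  obtain ⟨m₀, hm₀⟩ := exists_pairing_eq_inv_of_isUnit_repr haddl hsmull hconj hσO hσπ hb hi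
  let ℓ := pairingLeft haddl hsmull x
  have h2d : 2 * d = 2 * d - 1 + 1 := by omega
  have hlift : ∀ y : M,
      (∃ a : O, h y x = algebraMap O F (π ^ (2 * d - 1)) * algebraMap O F a) →
      ∃ z : M, h z x = 0 ∧ ∃ m : M, y - z = π ^ (2 * d) • m := by
    rintro y ⟨a, hy⟩
    rw [h2d]
    exact ℓ.exists_mem_ker_sub_eq_pow_smul hπ0 hm₀ _ hy
  refine ⟨hlift, ?_, fun y => ⟨?_, hlift y⟩⟩
  · rintro z hz ⟨m, rfl⟩
    exact ⟨m, ℓ.apply_eq_zero_of_apply_smul_eq_zero (by simpa using pow_ne_zero _ hπ0) hz, rfl⟩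
  · rintro ⟨z, hz, m, hyz⟩
    rw [h2d] at hyz
    exact ℓ.exists_apply_eq_pow_mul_of_sub_eq_pow_smul
      (pairing_mul_mem_range haddl hsmull hconj hσO hπ0 hσπ hb · x) hz _ hyz

theorem stmt_4
    -- the ramified quadratic setting
    {F O : Type*} [Field F] [CommRing O] [IsDomain O] [IsDiscreteValuationRing O]
    [Algebra O F] [IsFractionRing O F]
    (σ : F ≃+* F) (hσinv : ∀ x : F, σ (σ x) = x) (hσne : σ ≠ RingEquiv.refl F)
    (hσO : ∀ a : O, ∃ b : O, σ (algebraMap O F a) = algebraMap O F b)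
    (π : O) (hπ : Irreducible π)
    (hσπ : σ (algebraMap O F π) = - algebraMap O F π)
    (h2 : IsUnit (2 : O))
    -- the hermitian lattice M = H^s
    {M : Type*} [AddCommGroup M] [Module O M]
    (h : M → M → F)
    (haddl : ∀ x y z : M, h (x + y) z = h x z + h y z)
    (hsmull : ∀ (a : O) (x y : M), h (a • x) y = algebraMap O F a * h x y)
    (hconj : ∀ x y : M, h y x = σ (h x y))
    (s : ℕ) (hs : 1 ≤ s)
    (b : Module.Basis (Fin s × Fin 2) O M)
    (hb : ∀ i j, h (b i) (b j) = hypGram (algebraMap O F π) s i j)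
    -- d ≥ 1 and x ∈ M with h(x,x) ∈ O_{F₀}^×
    (d : ℕ) (hd : 1 ≤ d)
    (x : M) (hx : ∃ u : O, IsUnit u ∧ algebraMap O F u = h x x) :
    -- every y with h(y,x) ∈ π^{2d-1}O_F is congruent mod π^{2d}M to an element of M(x)
    (∀ y : M,
      (∃ a : O, h y x = algebraMap O F (π ^ (2 * d - 1)) * algebraMap O F a) →
      ∃ z : M, h z x = 0 ∧ ∃ m : M, y - z = π ^ (2 * d) • m) ∧
    -- injectivity of M(x)/π^{2d}M(x) → M/π^{2d}M
    (∀ z : M, h z x = 0 → (∃ m : M, z = π ^ (2 * d) • m) →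
      ∃ w : M, h w x = 0 ∧ z = π ^ (2 * d) • w) ∧
    -- the image consists exactly of the classes ȳ pairing to zero with x̄
    (∀ y : M,
      (∃ z : M, h z x = 0 ∧ ∃ m : M, y - z = π ^ (2 * d) • m) ↔
      (∃ a : O, h y x = algebraMap O F (π ^ (2 * d - 1)) * algebraMap O F a)) :=
  stmt_4_general σ hσO π hπ hσπ h haddl hsmull hconj s b hb d hd x hx
end
end
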